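/- arXiv:2601.01896 — 3 statements merged into one kernel-verified Lean document; each statement's English description precedes it below -/
import Mathlib

section
/- Let n ≥ 1, a : Fin n → ℝ and d : Fin n → ℝ, and define the softmax weights p j = exp(a j + d j) / Σ_k exp(a k + d k) and q j = exp(a j) / Σ_k exp(a k). If there is ε with 0 ≤ ε < 1 such that (1 - ε) * q j ≤ p j ≤ (1 + ε) * q j for all j, then for all j, k we have d j - d k ≤ Real.log ((1 + ε) / (1 - ε)). In particular the spread max_j d j - min_k d k is at most log((1+ε)/(1-ε)). -/
theorem softmax_ratio_bound_spread
    (n : ℕ) (hn : 1 ≤ n) (a d : Fin n → ℝ) (ε : ℝ)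
    (hε0 : 0 ≤ ε) (hε1 : ε < 1)
    (p q : Fin n → ℝ)
    (hp : ∀ j, p j = Real.exp (a j + d j) / ∑ k, Real.exp (a k + d k))
    (hq : ∀ j, q j = Real.exp (a j) / ∑ k, Real.exp (a k))
    (hlow : ∀ j, (1 - ε) * q j ≤ p j)
    (hhigh : ∀ j, p j ≤ (1 + ε) * q j) :
    ∀ j k, d j - d k ≤ Real.log ((1 + ε) / (1 - ε)) := by
  intro j k
  have hne : Nonempty (Fin n) := ⟨⟨0, hn⟩⟩
  set S : ℝ := ∑ i, Real.exp (a i) with hS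
  set T : ℝ := ∑ i, Real.exp (a i + d i) with hT
  have hSpos : 0 < S := Finset.sum_pos (fun i _ => Real.exp_pos _) Finset.univ_nonempty
  have hTpos : 0 < T := Finset.sum_pos (fun i _ => Real.exp_pos _) Finset.univ_nonempty
  have key : ∀ i, Real.exp (d i) * S ≤ (1 + ε) * T ∧ (1 - ε) * T ≤ Real.exp (d i) * S := by
    intro i
    have h1 := hhigh i
    have h2 := hlow i
    rw [hp, hq] at h1 h2
    rw [← mul_div_assoc, div_le_div_iff₀ hTpos hSpos, Real.exp_add] at h1
    rw [← mul_div_assoc, div_le_div_iff₀ hSpos hTpos, Real.exp_add] at h2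
    have hea : 0 < Real.exp (a i) := Real.exp_pos _
    constructor
    · have h3 : Real.exp (d i) * S * Real.exp (a i) ≤ (1 + ε) * T * Real.exp (a i) := by
        nlinarith [h1]
      exact le_of_mul_le_mul_right h3 hea
    · have h3 : (1 - ε) * T * Real.exp (a i) ≤ Real.exp (d i) * S * Real.exp (a i) := by
        nlinarith [h2]
      exact le_of_mul_le_mul_right h3 hea
  have hj := (key j).1
  have hk := (key k).2
  have h1ε : (0:ℝ) < 1 - ε := by linarith
  have hexp : Real.exp (d j - d k) ≤ (1 + ε) / (1 - ε) := by
    rw [Real.exp_sub, div_le_div_iff₀ (Real.exp_pos _) h1ε]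
    have h4 : (Real.exp (d j) * (1 - ε)) * S ≤ ((1 + ε) * Real.exp (d k)) * S := by
      nlinarith [hj, hk, Real.exp_pos (d j), Real.exp_pos (d k), mul_pos h1ε hTpos]
    have h5 := le_of_mul_le_mul_right h4 hSpos
    linarith
  calc d j - d k = Real.log (Real.exp (d j - d k)) := (Real.log_exp _).symm
    _ ≤ Real.log ((1 + ε) / (1 - ε)) := Real.log_le_log (Real.exp_pos _) hexp
end

section
/- For ξ > 1, there exists a unique x₀ > 0 such that ξ * Real.tanh x₀ = x₀. Moreover ξ * tanh x > x for all x in (0, x₀) and ξ * tanh x < x for all x > x₀. -/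
/-!
On `(0, ∞)` the equation `ξ * tanh x = x` says that the secant slope `ξ * tanh x / x` of the
strictly concave function `ξ * tanh` through the origin equals `1`. That slope is strictly
decreasing, tends to `ξ > 1` as `x → 0⁺` and is below `1` at `x = ξ` because `tanh < 1`,
so it crosses the level `1` exactly once.
-/

open Real Set

namespace Real

theorem hasDerivAt_tanh (x : ℝ) : HasDerivAt tanh (cosh x ^ 2)⁻¹ x := by
  have h := (hasDerivAt_sinh x).div (hasDerivAt_cosh x) (cosh_pos x).ne'
  rw [show sinh / cosh = tanh from funext fun y => (tanh_eq_sinh_div_cosh y).symm] at h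
  refine h.congr_deriv ?_
  rw [inv_eq_one_div, ← cosh_sq_sub_sinh_sq x]
  ring

theorem strictConcaveOn_const_mul_tanh {c : ℝ} (hc : 0 < c) :
    StrictConcaveOn ℝ (Ici 0) fun x => c * tanh x := by
  have hderiv (x : ℝ) : HasDerivAt (fun x => c * tanh x) (c * (cosh x ^ 2)⁻¹) x :=
    (hasDerivAt_tanh x).const_mul c
  refine StrictAntiOn.strictConcaveOn_of_deriv (convex_Ici 0)
    (fun x _ => (hderiv x).continuousAt.continuousWithinAt) ?_
  rw [interior_Ici]
  intro x hx y hy hxy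
  rw [(hderiv x).deriv, (hderiv y).deriv]
  have hcosh := cosh_strictMonoOn (mem_Ici_of_Ioi hx) (mem_Ici_of_Ioi hy) hxy
  gcongr

end Real

theorem StrictConcaveOn.strictAntiOn_slope {s : Set ℝ} {f : ℝ → ℝ} {a : ℝ}
    (hf : StrictConcaveOn ℝ s f) (ha : a ∈ s) : StrictAntiOn (slope f a) (s \ {a}) :=
  fun x hx y hy hxy => by
    simpa only [slope_def_field] using
      hf.secant_strict_mono ha hx.1 hy.1 hx.2 hy.2 hxy

theorem HasDerivWithinAt.exists_lt_slope_of_lt {f : ℝ → ℝ} {f' a c : ℝ}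
    (hf : HasDerivWithinAt f f' (Ioi a) a) (hc : c < f') : ∃ x > a, c < slope f a x := by
  have hlim := (hasDerivWithinAt_iff_tendsto_slope' (s := Ioi a) (lt_irrefl a)).1 hf
  obtain ⟨x, hcx, hx⟩ := ((hlim.eventually (lt_mem_nhds hc)).and self_mem_nhdsWithin).exists
  exact ⟨x, hx, hcx⟩

theorem slope_zero_eq_div {f : ℝ → ℝ} (h0 : f 0 = 0) (x : ℝ) : slope f 0 x = f x / x := by
  rw [slope_def_field, h0, sub_zero, sub_zero]

theorem StrictConcaveOn.exists_unique_pos_fixedPoint {f : ℝ → ℝ} {f' b : ℝ}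
    (hf : StrictConcaveOn ℝ (Ici 0) f) (h0 : f 0 = 0) (hf' : HasDerivWithinAt f f' (Ioi 0) 0)
    (hf'1 : 1 < f') (hb : 0 < b) (hfb : f b < b) :
    ∃ x₀ : ℝ, 0 < x₀ ∧ f x₀ = x₀ ∧
      (∀ y : ℝ, 0 < y → f y = y → y = x₀) ∧
      (∀ x : ℝ, 0 < x → x < x₀ → x < f x) ∧
      (∀ x : ℝ, x₀ < x → f x < x) := by
  set g := slope f 0
  have hg (x : ℝ) : g x = f x / x := slope_zero_eq_div h0 x
  have hanti : StrictAntiOn g (Ioi 0) :=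
    (hf.strictAntiOn_slope self_mem_Ici).mono fun x hx => ⟨mem_Ici_of_Ioi hx, ne_of_gt hx⟩
  have hcont : ContinuousOn g (Ioi 0) := by
    have hfc : ContinuousOn f (Ioi 0) := by
      simpa only [interior_Ici] using hf.concaveOn.continuousOn_interior
    exact (hfc.div continuousOn_id fun x hx => ne_of_gt hx).congr fun x _ => hg x
  obtain ⟨a, ha, hga⟩ := hf'.exists_lt_slope_of_lt hf'1
  have hgb : g b < 1 := by rwa [hg, div_lt_one hb]
  have hab : uIcc a b ⊆ Ioi 0 := fun x hx => lt_of_lt_of_le (lt_min ha hb) hx.1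
  obtain ⟨x₀, hx₀, hgx₀⟩ :=
    intermediate_value_uIcc (hcont.mono hab) (mem_uIcc.2 (Or.inr ⟨hgb.le, hga.le⟩))
  have hx₀0 : 0 < x₀ := hab hx₀
  refine ⟨x₀, hx₀0, ?_, fun y hy hfy => ?_, fun x hx hxx₀ => ?_, fun x hxx₀ => ?_⟩
  · rwa [hg x₀, div_eq_one_iff_eq hx₀0.ne'] at hgx₀
  · refine hanti.injOn hy hx₀0 ?_
    rw [hgx₀, hg y, hfy, div_self hy.ne']
  · have := hanti hx hx₀0 hxx₀
    rwa [hgx₀, hg x, one_lt_div hx] at this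
  · have hx : 0 < x := hx₀0.trans hxx₀
    have := hanti hx₀0 hx hxx₀
    rwa [hgx₀, hg x, div_lt_one hx] at this

theorem tanh_fixed_point (ξ : ℝ) (hξ : 1 < ξ) :
    ∃ x₀ : ℝ, 0 < x₀ ∧ ξ * Real.tanh x₀ = x₀ ∧
      (∀ y : ℝ, 0 < y → ξ * Real.tanh y = y → y = x₀) ∧
      (∀ x : ℝ, 0 < x → x < x₀ → x < ξ * Real.tanh x) ∧
      (∀ x : ℝ, x₀ < x → ξ * Real.tanh x < x) := by
  have hξ0 : 0 < ξ := zero_lt_one.trans hξ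
  have hderiv : HasDerivWithinAt (fun x => ξ * tanh x) ξ (Ioi 0) 0 := by
    simpa using ((hasDerivAt_tanh 0).const_mul ξ).hasDerivWithinAt
  have hξ_lt : ξ * tanh ξ < ξ := mul_lt_of_lt_one_right hξ0 (tanh_lt_one ξ)
  exact (strictConcaveOn_const_mul_tanh hξ0).exists_unique_pos_fixedPoint (by simp) hderiv hξ
    hξ0 hξ_lt
end

section
/- Let n ≥ 1, a : Fin n → ℝ, and 0 ≤ ε < 1. Define q j = exp(a j)/Σ_k exp(a k). Suppose d : Fin n → ℝ and p j = exp(a j + d j)/Σ_k exp(a k + d k) satisfy p j ≥ (1 - ε) * q j for all j and additionally d j ≥ 0 for all j with d j₀ = 0 for some index j₀. Then for all j, d j ≤ Real.log ((1/(1-ε)) * (1 + ε * (Σ_{k ≠ j} exp(a k - a j)))). -/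
/-!
Since `d j₀ = 0`, the lower bound `(1 - ε) q j₀ ≤ p j₀` compares only the two normalisers:
`(1 - ε) ∑ₖ exp (a k + d k) ≤ ∑ₖ exp (a k)`. As every boost is nonnegative, the terms `k ≠ j` on
the left dominate those on the right, which leaves `(1 - ε) exp (a j + d j) ≤ exp (a j) + ε ∑_{k ≠ j} exp (a k)`.
Dividing by `exp (a j)` and taking logarithms gives the bound.
-/

open Finset Real

variable {ι : Type*} [Fintype ι]

lemma mul_sum_exp_add_le_sum_exp_of_le {a d : ι → ℝ} {c : ℝ} {i : ι} (hd : d i = 0)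
    (h : c * (exp (a i) / ∑ k, exp (a k)) ≤ exp (a i + d i) / ∑ k, exp (a k + d k)) :
    c * ∑ k, exp (a k + d k) ≤ ∑ k, exp (a k) := by
  have : Nonempty ι := ⟨i⟩
  have hS : 0 < ∑ k, exp (a k) := sum_pos (fun k _ ↦ exp_pos _) univ_nonempty
  have hT : 0 < ∑ k, exp (a k + d k) := sum_pos (fun k _ ↦ exp_pos _) univ_nonempty
  rw [hd, add_zero, ← mul_div_assoc, div_le_div_iff₀ hS hT, mul_right_comm] at h
  exact le_of_mul_le_mul_right (by linarith) (exp_pos (a i))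

lemma mul_exp_le_one_add_mul_sum_exp_sub [DecidableEq ι] {a d : ι → ℝ} {c : ℝ} (hc : 0 ≤ c)
    (hd : ∀ k, 0 ≤ d k) (h : c * ∑ k, exp (a k + d k) ≤ ∑ k, exp (a k)) (j : ι) :
    c * exp (d j) ≤ 1 + (1 - c) * ∑ k ∈ univ.erase j, exp (a k - a j) := by
  set R := ∑ k ∈ univ.erase j, exp (a k)
  have hR : ∑ k ∈ univ.erase j, exp (a k - a j) * exp (a j) = R :=
    sum_congr rfl fun k _ ↦ by rw [← exp_add, sub_add_cancel]
  have hboost : R ≤ ∑ k ∈ univ.erase j, exp (a k + d k) :=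
    sum_le_sum fun k _ ↦ exp_le_exp.2 (le_add_of_nonneg_right (hd k))
  rw [← add_sum_erase _ _ (mem_univ j), ← add_sum_erase _ _ (mem_univ j)] at h
  refine le_of_mul_le_mul_right ?_ (exp_pos (a j))
  calc c * exp (d j) * exp (a j) = c * exp (a j + d j) := by rw [mul_assoc, ← exp_add, add_comm]
    _ ≤ exp (a j) + (1 - c) * R := by nlinarith
    _ = (1 + (1 - c) * ∑ k ∈ univ.erase j, exp (a k - a j)) * exp (a j) := by
      rw [← hR, ← sum_mul]; ring

theorem nonneg_boost_bound_general
    (n : ℕ) (a : Fin n → ℝ) (ε : ℝ)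
    (hε1 : ε < 1)
    (d : Fin n → ℝ) (p q : Fin n → ℝ)
    (hq : ∀ j, q j = Real.exp (a j) / ∑ k, Real.exp (a k))
    (hp : ∀ j, p j = Real.exp (a j + d j) / ∑ k, Real.exp (a k + d k))
    (hlow : ∀ j, (1 - ε) * q j ≤ p j)
    (hd0 : ∀ j, 0 ≤ d j) (j₀ : Fin n) (hj₀ : d j₀ = 0) :
    ∀ j, d j ≤ Real.log ((1 / (1 - ε)) *
      (1 + ε * ∑ k ∈ Finset.univ.erase j, Real.exp (a k - a j))) := by
  intro j
  have hε : 0 < 1 - ε := sub_pos.2 hε1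
  have hnorm : (1 - ε) * ∑ k, exp (a k + d k) ≤ ∑ k, exp (a k) :=
    mul_sum_exp_add_le_sum_exp_of_le hj₀ (by simpa only [hp, hq] using hlow j₀)
  have hj := mul_exp_le_one_add_mul_sum_exp_sub hε.le hd0 hnorm j
  rw [sub_sub_cancel, ← le_div_iff₀' hε] at hj
  rw [one_div, ← div_eq_inv_mul, le_log_iff_exp_le ((exp_pos _).trans_le hj)]
  exact hj

theorem nonneg_boost_bound
    (n : ℕ) (hn : 1 ≤ n) (a : Fin n → ℝ) (ε : ℝ)
    (hε0 : 0 ≤ ε) (hε1 : ε < 1)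
    (d : Fin n → ℝ) (p q : Fin n → ℝ)
    (hq : ∀ j, q j = Real.exp (a j) / ∑ k, Real.exp (a k))
    (hp : ∀ j, p j = Real.exp (a j + d j) / ∑ k, Real.exp (a k + d k))
    (hlow : ∀ j, (1 - ε) * q j ≤ p j)
    (hd0 : ∀ j, 0 ≤ d j) (j₀ : Fin n) (hj₀ : d j₀ = 0) :
    ∀ j, d j ≤ Real.log ((1 / (1 - ε)) *
      (1 + ε * ∑ k ∈ Finset.univ.erase j, Real.exp (a k - a j))) :=
  nonneg_boost_bound_general n a ε hε1 d p q hq hp hlow hd0 j₀ hj₀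
end
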